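/- Let W₁, W₂ be types, A₁, B₁ : Finset W₁ and A₂, B₂ : Finset W₂. For every l ∈ W₁ and j ∈ W₂ one has d(χ_{A₁}(l) − χ_{A₂}(j), χ_{B₁}(l) − χ_{B₂}(j)) = d(χ_{A₁∪B₁}(l) − χ_{A₂∪B₂}(j), χ_{A₁∩B₁}(l) − χ_{A₂∩B₂}(j)) + ε(l,j), where ε(l,j) = 1 if (l ∈ A₁ \ B₁ and j ∈ B₂ \ A₂) or (l ∈ B₁ \ A₁ and j ∈ A₂ \ B₂), and ε(l,j) = 0 otherwise. -/

import Mathlib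

/-- `d(u, v) = min(|u|, |v|)` if `u` and `v` have strictly opposite signs, and
`0` otherwise. -/
def dExp (u v : ℤ) : ℕ := if u * v < 0 then min u.natAbs v.natAbs else 0

/-- The `ℤ`-valued indicator function of a Finset. -/
def chi {W : Type*} [DecidableEq W] (S : Finset W) (p : W) : ℤ :=
  if p ∈ S then 1 else 0

/-!
The weights `χ_A(l) − χ_A'(j)` lie in `{-1, 0, 1}`, so `d` is `1` when the two weights have
opposite signs and `0` otherwise. For `(A, B)` this happens exactly in the two cases listed
in `ε`. For `(A ∪ B, A ∩ B)` it never happens: the second pair of sets is contained in the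
first, and a negative product would force `l` or `j` into the smaller set but not the larger.
-/

theorem dExp_of_mul_nonneg {u v : ℤ} (h : 0 ≤ u * v) : dExp u v = 0 :=
  if_neg h.not_gt

theorem dExp_of_natAbs_le_one {u v : ℤ} (hu : u.natAbs ≤ 1) (hv : v.natAbs ≤ 1) :
    dExp u v = if u * v < 0 then 1 else 0 := by
  unfold dExp
  split_ifs with h
  · have hu0 : u ≠ 0 := left_ne_zero_of_mul (h.ne)
    have hv0 : v ≠ 0 := right_ne_zero_of_mul (h.ne)
    omega
  · rfl

section Chi

variable {W₁ W₂ : Type*} [DecidableEq W₁] [DecidableEq W₂]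

theorem natAbs_chi_sub_chi_le_one (S₁ : Finset W₁) (S₂ : Finset W₂) (l : W₁) (j : W₂) :
    (chi S₁ l - chi S₂ j).natAbs ≤ 1 := by
  unfold chi
  split_ifs <;> decide

theorem chi_sub_chi_mul_chi_sub_chi_nonneg {S₁ T₁ : Finset W₁} {S₂ T₂ : Finset W₂}
    (h₁ : T₁ ⊆ S₁) (h₂ : T₂ ⊆ S₂) (l : W₁) (j : W₂) :
    0 ≤ (chi S₁ l - chi S₂ j) * (chi T₁ l - chi T₂ j) := by
  have hl : l ∈ T₁ → l ∈ S₁ := fun h => h₁ h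
  have hj : j ∈ T₂ → j ∈ S₂ := fun h => h₂ h
  unfold chi
  by_cases hS₁ : l ∈ S₁ <;> by_cases hS₂ : j ∈ S₂ <;>
    by_cases hT₁ : l ∈ T₁ <;> by_cases hT₂ : j ∈ T₂ <;> simp_all

theorem chi_sub_chi_mul_chi_sub_chi_neg_iff (A₁ B₁ : Finset W₁) (A₂ B₂ : Finset W₂)
    (l : W₁) (j : W₂) :
    (chi A₁ l - chi A₂ j) * (chi B₁ l - chi B₂ j) < 0 ↔
      (l ∈ A₁ \ B₁ ∧ j ∈ B₂ \ A₂) ∨ (l ∈ B₁ \ A₁ ∧ j ∈ A₂ \ B₂) := by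
  unfold chi
  simp only [Finset.mem_sdiff]
  by_cases hA₁ : l ∈ A₁ <;> by_cases hB₁ : l ∈ B₁ <;>
    by_cases hA₂ : j ∈ A₂ <;> by_cases hB₂ : j ∈ B₂ <;> simp [hA₁, hB₁, hA₂, hB₂]

end Chi

/-- Two-vertex version: for each pair `(l, j)` with `l ∈ W₁`, `j ∈ W₂`, the
exponent `d` for `(A, B)` exceeds the one for `(A ∪ B, A ∩ B)` by `1` exactly
when `(l ∈ A₁\B₁ ∧ j ∈ B₂\A₂)` or `(l ∈ B₁\A₁ ∧ j ∈ A₂\B₂)`. -/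
theorem dExp_chi_union_inter_two {W₁ W₂ : Type*} [DecidableEq W₁] [DecidableEq W₂]
    (A₁ B₁ : Finset W₁) (A₂ B₂ : Finset W₂) (l : W₁) (j : W₂) :
    dExp (chi A₁ l - chi A₂ j) (chi B₁ l - chi B₂ j)
      = dExp (chi (A₁ ∪ B₁) l - chi (A₂ ∪ B₂) j)
            (chi (A₁ ∩ B₁) l - chi (A₂ ∩ B₂) j)
        + (if (l ∈ A₁ \ B₁ ∧ j ∈ B₂ \ A₂) ∨ (l ∈ B₁ \ A₁ ∧ j ∈ A₂ \ B₂)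
            then 1 else 0) := by
  have hUnionInter : dExp (chi (A₁ ∪ B₁) l - chi (A₂ ∪ B₂) j)
      (chi (A₁ ∩ B₁) l - chi (A₂ ∩ B₂) j) = 0 :=
    dExp_of_mul_nonneg <| chi_sub_chi_mul_chi_sub_chi_nonneg
      Finset.inter_subset_union Finset.inter_subset_union l j
  rw [hUnionInter, zero_add,
    dExp_of_natAbs_le_one (natAbs_chi_sub_chi_le_one ..) (natAbs_chi_sub_chi_le_one ..)]
  exact if_congr (chi_sub_chi_mul_chi_sub_chi_neg_iff ..) rfl rfl
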